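/- arXiv:2002.03697 — 3 statements merged into one kernel-verified Lean document; each statement's English description precedes it below -/
import Mathlib

section
/- For non-atomic Borel probability measures μ and ν on [0,1] with distribution functions F and G, the derivatives of the generalized hyperbolic cosines satisfy ‖cosh_z' − cosh_{z,ν}'‖_∞ ≤ (z² + 2z⁴ e^{z²}) ‖F−G‖_∞, where cosh_z'(x) = Σ_{k≥1} p_{2k−1}(x) z^{2k}. -/
open MeasureTheory Set Real Filter

noncomputable def genP (μ : Measure ℝ) : ℕ → ℝ → ℝ
  | 0 => fun _ => 1
  | k + 1 => fun x =>
      if Odd (k + 1) then ∫ t in (0:ℝ)..x, genP μ k t ∂μ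
      else ∫ t in (0:ℝ)..x, genP μ k t

noncomputable def genQ (μ : Measure ℝ) : ℕ → ℝ → ℝ
  | 0 => fun _ => 1
  | k + 1 => fun x =>
      if Odd (k + 1) then ∫ t in (0:ℝ)..x, genQ μ k t
      else ∫ t in (0:ℝ)..x, genQ μ k t ∂μ

noncomputable def genCosh (μ : Measure ℝ) (z : ℝ) (x : ℝ) : ℝ :=
  ∑' k : ℕ, z ^ (2 * k) * genP μ (2 * k) x

noncomputable def genSinh (μ : Measure ℝ) (z : ℝ) (x : ℝ) : ℝ :=
  ∑' k : ℕ, z ^ (2 * k + 1) * genQ μ (2 * k + 1) x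

/-- sup-distance between distribution functions on [0,1] -/
noncomputable def distSup (μ ν : Measure ℝ) : ℝ :=
  ⨆ x : Set.Icc (0:ℝ) 1, |(μ (Set.Icc 0 (x:ℝ))).toReal - (ν (Set.Icc 0 (x:ℝ))).toReal|


/-- the derivative series cosh_z'(x) = Σ_{k≥1} p_{2k-1}(x) z^{2k} -/
noncomputable def genCoshDeriv (μ : Measure ℝ) (z : ℝ) (x : ℝ) : ℝ :=
  ∑' k : ℕ, genP μ (2 * (k + 1) - 1) x * z ^ (2 * (k + 1))

/-!
On `[0, ∞)` the monomials satisfy `0 ≤ p_{2m}(x), p_{2m+1}(x) ≤ x^m / m!`: integrating against the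
probability measure `μ` preserves a monotone bound, while integrating against Lebesgue measure
turns `x^m / m!` into `x^{m+1} / (m+1)!`. Hence on `[0, 1]` both series for `cosh_z'` are dominated
by `z² e^{z²}` and can be subtracted termwise. The hypotheses bound the first term of the
difference by `‖F - G‖ z²` and the `(j+2)`-nd by `2 ‖F - G‖ z⁴ (z²)^j / j!`, whose sum is the
exponential series.
-/

open scoped Nat

namespace genP

variable (μ : Measure ℝ)

theorem two_mul_add_one_apply (m : ℕ) (x : ℝ) :
    genP μ (2 * m + 1) x = ∫ t in (0:ℝ)..x, genP μ (2 * m) t ∂μ := by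
  simp [genP]

theorem two_mul_add_two_apply (m : ℕ) (x : ℝ) :
    genP μ (2 * m + 2) x = ∫ t in (0:ℝ)..x, genP μ (2 * m + 1) t := by
  have h : ¬Odd (2 * m + 2) := by simp [Nat.odd_add_one, parity_simps]
  simp only [genP, h, if_false]

theorem continuous [IsLocallyFiniteMeasure μ] [NullSingletonClass μ] (n : ℕ) :
    Continuous (genP μ n) := by
  induction n with
  | zero => exact continuous_const
  | succ k ih =>
    by_cases h : Odd (k + 1) <;> simp only [genP, h, if_true, if_false] <;>
      exact intervalIntegral.continuous_primitive (fun a b => ih.intervalIntegrable a b) 0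

theorem nonneg (n : ℕ) {x : ℝ} (hx : 0 ≤ x) : 0 ≤ genP μ n x := by
  induction n generalizing x with
  | zero => exact zero_le_one
  | succ k ih =>
    by_cases h : Odd (k + 1) <;> simp only [genP, h, if_true, if_false] <;>
      exact intervalIntegral.integral_nonneg hx fun t ht => ih ht.1

end genP

theorem intervalIntegral.integral_le_of_le_const {μ : Measure ℝ} [IsZeroOrProbabilityMeasure μ]
    {f : ℝ → ℝ} {a b c : ℝ} (hab : a ≤ b) (hc : 0 ≤ c) (hf : IntervalIntegrable f μ a b)
    (hle : ∀ t ∈ Icc a b, f t ≤ c) : ∫ t in a..b, f t ∂μ ≤ c :=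
  calc ∫ t in a..b, f t ∂μ ≤ ∫ _ in a..b, c ∂μ :=
        intervalIntegral.integral_mono_on hab hf intervalIntegrable_const hle
    _ = μ.real (Ioc a b) * c := by
        simp [intervalIntegral.integral_const', Ioc_eq_empty_of_le hab]
    _ ≤ c := mul_le_of_le_one_left hc measureReal_le_one

theorem integral_pow_div_factorial (m : ℕ) (x : ℝ) :
    ∫ t in (0:ℝ)..x, t ^ m / m ! = x ^ (m + 1) / (m + 1)! := by
  rw [intervalIntegral.integral_div, integral_pow, Nat.factorial_succ]
  push_cast
  rw [zero_pow m.succ_ne_zero, sub_zero, div_div]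

namespace genP

variable {μ : Measure ℝ} [IsProbabilityMeasure μ] [NullSingletonClass μ]

theorem two_mul_add_one_le_of_two_mul_le {m : ℕ}
    (h : ∀ t, 0 ≤ t → genP μ (2 * m) t ≤ t ^ m / m !) {x : ℝ} (hx : 0 ≤ x) :
    genP μ (2 * m + 1) x ≤ x ^ m / m ! := by
  rw [two_mul_add_one_apply]
  refine intervalIntegral.integral_le_of_le_const hx (by positivity)
    ((continuous μ _).intervalIntegrable _ _) fun t ht => (h t ht.1).trans ?_
  gcongr
  exacts [ht.1, ht.2]

theorem two_mul_le (m : ℕ) {x : ℝ} (hx : 0 ≤ x) : genP μ (2 * m) x ≤ x ^ m / m ! := by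
  induction m generalizing x with
  | zero => simp [genP]
  | succ m ih =>
    rw [mul_add_one, two_mul_add_two_apply, ← integral_pow_div_factorial]
    exact intervalIntegral.integral_mono_on hx ((continuous μ _).intervalIntegrable _ _)
      (((continuous_pow m).div_const _).intervalIntegrable _ _)
      fun t ht => two_mul_add_one_le_of_two_mul_le (fun s hs => ih hs) ht.1

theorem two_mul_add_one_le (m : ℕ) {x : ℝ} (hx : 0 ≤ x) :
    genP μ (2 * m + 1) x ≤ x ^ m / m ! :=
  two_mul_add_one_le_of_two_mul_le (fun _ ht => two_mul_le m ht) hx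

end genP

theorem summable_genCoshDeriv_terms (μ : Measure ℝ) [IsProbabilityMeasure μ]
    [NullSingletonClass μ] (z : ℝ) {x : ℝ} (hx : x ∈ Icc (0:ℝ) 1) :
    Summable fun k : ℕ => genP μ (2 * (k + 1) - 1) x * z ^ (2 * (k + 1)) := by
  refine .of_norm_bounded ((Real.summable_pow_div_factorial (z ^ 2)).mul_left (z ^ 2)) fun k => ?_
  rw [show 2 * (k + 1) - 1 = 2 * k + 1 by omega, Real.norm_eq_abs, abs_mul,
    abs_of_nonneg (genP.nonneg μ _ hx.1), pow_mul, abs_of_nonneg (by positivity)]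
  calc genP μ (2 * k + 1) x * (z ^ 2) ^ (k + 1) ≤ x ^ k / k ! * (z ^ 2) ^ (k + 1) := by
        gcongr
        exact genP.two_mul_add_one_le k hx.1
    _ ≤ 1 / k ! * (z ^ 2) ^ (k + 1) := by
        gcongr
        exact pow_le_one₀ hx.1 hx.2
    _ = z ^ 2 * ((z ^ 2) ^ k / k !) := by ring

theorem abs_tsum_le_add_mul_exp {a : ℕ → ℝ} {A B w : ℝ} (h₀ : |a 0| ≤ A)
    (h_succ : ∀ j, |a (j + 1)| ≤ B * (w ^ j / j !)) : |∑' k, a k| ≤ A + B * exp w := by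
  have h_maj : Summable fun j : ℕ => B * (w ^ j / j !) :=
    (Real.summable_pow_div_factorial w).mul_left B
  have h_abs : Summable fun j => |a (j + 1)| :=
    h_maj.of_nonneg_of_le (fun _ => abs_nonneg _) h_succ
  have h_a : Summable a := (summable_nat_add_iff 1).mp h_abs.of_abs
  calc |∑' k, a k| = |a 0 + ∑' j, a (j + 1)| := by rw [h_a.tsum_eq_zero_add]
    _ ≤ |a 0| + ∑' j, |a (j + 1)| := by
        refine (abs_add_le _ _).trans (add_le_add_right ?_ _)
        have h_norm : Summable fun j => ‖a (j + 1)‖ := by simpa only [Real.norm_eq_abs] using h_abs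
        simpa only [Real.norm_eq_abs] using norm_tsum_le_tsum_norm h_norm
    _ ≤ A + ∑' j, B * (w ^ j / j !) := add_le_add h₀ (h_abs.tsum_le_tsum h_succ h_maj)
    _ = A + B * exp w := by
        rw [tsum_mul_left, Real.exp_eq_exp_ℝ, (NormedSpace.expSeries_div_hasSum_exp w).tsum_eq]

theorem distSup_nonneg (μ ν : Measure ℝ) : 0 ≤ distSup μ ν :=
  Real.iSup_nonneg fun _ => abs_nonneg _

theorem stmt_6_general (μ ν : Measure ℝ) [IsProbabilityMeasure μ] [IsProbabilityMeasure ν]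
    (hμna : ∀ x : ℝ, μ {x} = 0) (hνna : ∀ x : ℝ, ν {x} = 0)
    (hkey1 : ∀ x ∈ Set.Icc (0:ℝ) 1, |genP μ 1 x - genP ν 1 x| ≤ distSup μ ν)
    (hkey : ∀ k : ℕ, 2 ≤ k → ∀ x ∈ Set.Icc (0:ℝ) 1,
      |genP μ (2 * k - 1) x - genP ν (2 * k - 1) x|
        ≤ 2 * distSup μ ν * x ^ (k - 1) / (Nat.factorial (k - 2) : ℝ)) :
    ∀ z : ℝ, ∀ x ∈ Set.Icc (0:ℝ) 1,
      |genCoshDeriv μ z x - genCoshDeriv ν z x|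
        ≤ (z ^ 2 + 2 * z ^ 4 * Real.exp (z ^ 2)) * distSup μ ν := by
  have : NullSingletonClass μ := ⟨hμna⟩
  have : NullSingletonClass ν := ⟨hνna⟩
  intro z x hx
  set D := distSup μ ν
  have hD : 0 ≤ D := distSup_nonneg μ ν
  rw [genCoshDeriv, genCoshDeriv, ← (summable_genCoshDeriv_terms μ z hx).tsum_sub
    (summable_genCoshDeriv_terms ν z hx)]
  refine (abs_tsum_le_add_mul_exp (A := D * z ^ 2) (B := 2 * D * z ^ 4) (w := z ^ 2)
    ?_ fun j => ?_).trans_eq (by ring)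
  · rw [← sub_mul, abs_mul, pow_mul, abs_pow, abs_sq]
    exact mul_le_mul_of_nonneg_right (hkey1 x hx) (by positivity)
  · have h_diff : |genP μ (2 * (j + 1 + 1) - 1) x - genP ν (2 * (j + 1 + 1) - 1) x|
        ≤ 2 * D * x ^ (j + 1) / j ! := hkey (j + 2) (by omega) x hx
    rw [← sub_mul, abs_mul, pow_mul, abs_pow, abs_sq]
    calc _ ≤ 2 * D * x ^ (j + 1) / j ! * (z ^ 2) ^ (j + 1 + 1) := by gcongr
      _ ≤ 2 * D * 1 / j ! * (z ^ 2) ^ (j + 1 + 1) := by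
          gcongr
          exact pow_le_one₀ hx.1 hx.2
      _ = 2 * D * z ^ 4 * ((z ^ 2) ^ j / j !) := by ring

theorem stmt_6 (μ ν : Measure ℝ) [IsProbabilityMeasure μ] [IsProbabilityMeasure ν]
    (hμs : μ (Set.Icc (0:ℝ) 1)ᶜ = 0) (hνs : ν (Set.Icc (0:ℝ) 1)ᶜ = 0)
    (hμna : ∀ x : ℝ, μ {x} = 0) (hνna : ∀ x : ℝ, ν {x} = 0)
    (hkey1 : ∀ x ∈ Set.Icc (0:ℝ) 1, |genP μ 1 x - genP ν 1 x| ≤ distSup μ ν)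
    (hkey : ∀ k : ℕ, 2 ≤ k → ∀ x ∈ Set.Icc (0:ℝ) 1,
      |genP μ (2 * k - 1) x - genP ν (2 * k - 1) x|
        ≤ 2 * distSup μ ν * x ^ (k - 1) / (Nat.factorial (k - 2) : ℝ)) :
    ∀ z : ℝ, ∀ x ∈ Set.Icc (0:ℝ) 1,
      |genCoshDeriv μ z x - genCoshDeriv ν z x|
        ≤ (z ^ 2 + 2 * z ^ 4 * Real.exp (z ^ 2)) * distSup μ ν :=
  stmt_6_general μ ν hμna hνna hkey1 hkey
end

section
/- The function g(x) = cosh_{√λ}(x) satisfies g(x) = 1 + λ ∫_0^x ∫_0^y g(t) dμ(t) dy for all x ∈ [0,1]; i.e. cosh_{√λ} solves Δ_μ g = λ g with g(0) = 1 and g'(0) = 0. -/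
open MeasureTheory Set Real Filter

/-- cosh_{√λ}(x) = Σ_{k≥0} λ^k p_{2k}(x) -/
noncomputable def coshL (μ : Measure ℝ) (l : ℝ) (x : ℝ) : ℝ :=
  ∑' k : ℕ, l ^ k * genP μ (2 * k) x

/-!
On `[0,1]` every `p_n` is monotone with `0 ≤ p_n x ≤ x ^ (n / 2) / (n / 2)!`: a `μ`-integration
step cannot increase a monotone nonnegative function because `μ` has mass at most one, and a
Lebesgue step integrates the monomial bound. Hence the terms of `∑ λ ^ k p_{2k+j}` are bounded by
`|λ| ^ k / k!` uniformly on `[0,1]`, so the series may be integrated termwise (dominated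
convergence). Integrating `cosh_{√λ}` once against `μ` and once against Lebesgue measure turns
`λ ^ k p_{2k}` into `λ ^ k p_{2k+2}`, and shifting the index gives `cosh_{√λ} = 1 + λ ∑ λ ^ k p_{2k+2}`.
-/

open scoped Nat

section Primitive

variable {f : ℝ → ℝ} {a b : ℝ} {ν : Measure ℝ}

lemma monotoneOn_intervalIntegral [IsLocallyFiniteMeasure ν] (hmono : MonotoneOn f (Icc a b))
    (hnonneg : ∀ t ∈ Icc a b, 0 ≤ f t) :
    MonotoneOn (fun x => ∫ t in a..x, f t ∂ν) (Icc a b) := by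
  intro x hx y hy hxy
  refine intervalIntegral.integral_mono_interval le_rfl hx.1 hxy ?_ ?_
  · exact (ae_restrict_iff' measurableSet_Ioc).2 <|
      ae_of_all _ fun t ht => hnonneg t ⟨ht.1.le, ht.2.trans hy.2⟩
  · exact (hmono.mono (uIcc_subset_Icc ⟨le_rfl, hy.1.trans hy.2⟩ hy)).intervalIntegrable

lemma intervalIntegral_le_of_monotoneOn [IsProbabilityMeasure ν] (hab : a ≤ b)
    (hmono : MonotoneOn f (Icc a b)) (hb : 0 ≤ f b) :
    ∫ t in a..b, f t ∂ν ≤ f b :=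
  calc ∫ t in a..b, f t ∂ν ≤ ∫ _ in a..b, f b ∂ν := by
        refine intervalIntegral.integral_mono_on hab ?_ intervalIntegrable_const
          fun t ht => hmono ht ⟨hab, le_rfl⟩ ht.2
        exact (uIcc_of_le hab ▸ hmono).intervalIntegrable
    _ = ν.real (Ioc a b) * f b := by
        rw [intervalIntegral.integral_of_le hab, setIntegral_const, smul_eq_mul]
    _ ≤ f b := mul_le_of_le_one_left hb measureReal_le_one

end Primitive

section GenP

variable {μ : Measure ℝ}

@[simp]
lemma genP_zero (x : ℝ) : genP μ 0 x = 1 := rfl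

lemma genP_two_mul_add_one (k : ℕ) (x : ℝ) :
    genP μ (2 * k + 1) x = ∫ t in (0:ℝ)..x, genP μ (2 * k) t ∂μ := by
  rw [genP]
  exact if_pos (odd_two_mul_add_one k)

lemma genP_two_mul_add_two (k : ℕ) (x : ℝ) :
    genP μ (2 * k + 2) x = ∫ t in (0:ℝ)..x, genP μ (2 * k + 1) t := by
  rw [genP]
  exact if_neg (by rw [Nat.not_odd_iff_even]; exact ⟨k + 1, by ring⟩)

variable [IsProbabilityMeasure μ]

lemma monotoneOn_genP_and_bounds (n : ℕ) :
    MonotoneOn (genP μ n) (Icc 0 1) ∧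
      ∀ x ∈ Icc (0:ℝ) 1, 0 ≤ genP μ n x ∧ genP μ n x ≤ x ^ (n / 2) / (n / 2)! := by
  induction n with
  | zero => exact ⟨monotoneOn_const, fun x _ => by simp⟩
  | succ n ih =>
    obtain ⟨hmono, hbound⟩ := ih
    have hnonneg t (ht : t ∈ Icc (0:ℝ) 1) := (hbound t ht).1
    obtain ⟨m, rfl | rfl⟩ := Nat.even_or_odd' n
    · have heq : genP μ (2 * m + 1) = fun x => ∫ t in (0:ℝ)..x, genP μ (2 * m) t ∂μ :=
        funext (genP_two_mul_add_one m)
      have hdiv : (2 * m + 1) / 2 = 2 * m / 2 := by omega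
      refine ⟨heq ▸ monotoneOn_intervalIntegral hmono hnonneg, fun x hx => ⟨?_, ?_⟩⟩
      · rw [heq]
        exact intervalIntegral.integral_nonneg hx.1 fun t ht => hnonneg t ⟨ht.1, ht.2.trans hx.2⟩
      · rw [heq, hdiv]
        exact (intervalIntegral_le_of_monotoneOn hx.1
          (hmono.mono (Icc_subset_Icc le_rfl hx.2)) (hnonneg x hx)).trans (hbound x hx).2
    · have heq : genP μ (2 * m + 2) = fun x => ∫ t in (0:ℝ)..x, genP μ (2 * m + 1) t :=
        funext (genP_two_mul_add_two m)
      have hdiv : (2 * m + 1 + 1) / 2 = m + 1 := by omega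
      have hdiv' : (2 * m + 1) / 2 = m := by omega
      refine ⟨heq ▸ monotoneOn_intervalIntegral hmono hnonneg, fun x hx => ⟨?_, ?_⟩⟩
      · rw [heq]
        exact intervalIntegral.integral_nonneg hx.1 fun t ht => hnonneg t ⟨ht.1, ht.2.trans hx.2⟩
      · rw [heq, hdiv]
        calc ∫ t in (0:ℝ)..x, genP μ (2 * m + 1) t
            ≤ ∫ t in (0:ℝ)..x, t ^ m / m ! := by
              refine intervalIntegral.integral_mono_on hx.1 ?_
                (((continuous_pow m).div_const _).intervalIntegrable _ _)
                fun t ht => (hbound t ⟨ht.1, ht.2.trans hx.2⟩).2.trans_eq (by rw [hdiv'])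
              exact (hmono.mono (uIcc_subset_Icc ⟨le_rfl, zero_le_one⟩ hx)).intervalIntegrable
          _ = x ^ (m + 1) / (m + 1)! := by
              rw [intervalIntegral.integral_div, integral_pow, Nat.factorial_succ]
              push_cast
              field_simp
              ring

lemma norm_genP_le (n : ℕ) {x : ℝ} (hx : x ∈ Icc (0:ℝ) 1) :
    ‖genP μ n x‖ ≤ ((n / 2)! : ℝ)⁻¹ := by
  obtain ⟨hnonneg, hle⟩ := (monotoneOn_genP_and_bounds (μ := μ) n).2 x hx
  rw [Real.norm_eq_abs, abs_of_nonneg hnonneg, ← one_div]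
  exact hle.trans (div_le_div_of_nonneg_right (pow_le_one₀ hx.1 hx.2) (by positivity))

lemma norm_pow_mul_genP_le (l : ℝ) (k j : ℕ) {x : ℝ} (hx : x ∈ Icc (0:ℝ) 1) :
    ‖l ^ k * genP μ (2 * k + j) x‖ ≤ |l| ^ k / k ! := by
  rw [norm_mul, norm_pow, Real.norm_eq_abs, div_eq_mul_inv]
  refine mul_le_mul_of_nonneg_left ((norm_genP_le _ hx).trans ?_) (by positivity)
  exact inv_anti₀ (by positivity) (Nat.cast_le.2 (Nat.factorial_le (by omega)))

lemma summable_pow_mul_genP (l : ℝ) (j : ℕ) {x : ℝ} (hx : x ∈ Icc (0:ℝ) 1) :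
    Summable fun k => l ^ k * genP μ (2 * k + j) x :=
  .of_norm_bounded (Real.summable_pow_div_factorial |l|) fun k => norm_pow_mul_genP_le l k j hx

lemma intervalIntegral_tsum_pow_mul_genP {ν : Measure ℝ} [IsLocallyFiniteMeasure ν] (l : ℝ)
    (j : ℕ) {y : ℝ} (hy : y ∈ Icc (0:ℝ) 1) :
    ∫ t in (0:ℝ)..y, (∑' k, l ^ k * genP μ (2 * k + j) t) ∂ν
      = ∑' k, l ^ k * ∫ t in (0:ℝ)..y, genP μ (2 * k + j) t ∂ν := by
  have hsub : uIcc 0 y ⊆ Icc 0 1 := uIcc_subset_Icc ⟨le_rfl, zero_le_one⟩ hy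
  have hint (n : ℕ) : IntervalIntegrable (genP μ n) ν 0 y :=
    ((monotoneOn_genP_and_bounds n).1.mono hsub).intervalIntegrable
  have hsum := intervalIntegral.hasSum_integral_of_dominated_convergence
    (fun k _ => |l| ^ k / k !) (fun k => ((hint _).const_mul (l ^ k)).def'.aestronglyMeasurable)
    (fun k => ae_of_all _ fun t ht => norm_pow_mul_genP_le l k j (hsub (uIoc_subset_uIcc ht)))
    (ae_of_all _ fun _ _ => Real.summable_pow_div_factorial _) intervalIntegrable_const
    (ae_of_all _ fun t ht => (summable_pow_mul_genP l j (hsub (uIoc_subset_uIcc ht))).hasSum)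
  rw [← hsum.tsum_eq]
  simp only [intervalIntegral.integral_const_mul]

lemma intervalIntegral_coshL (l : ℝ) {y : ℝ} (hy : y ∈ Icc (0:ℝ) 1) :
    ∫ t in (0:ℝ)..y, coshL μ l t ∂μ = ∑' k, l ^ k * genP μ (2 * k + 1) y := by
  simp only [coshL, genP_two_mul_add_one]
  exact intervalIntegral_tsum_pow_mul_genP l 0 hy

lemma coshL_eq_one_add (l : ℝ) {x : ℝ} (hx : x ∈ Icc (0:ℝ) 1) :
    coshL μ l x = 1 + l * ∑' k, l ^ k * genP μ (2 * k + 2) x := by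
  have hsum : Summable fun k => l ^ k * genP μ (2 * k) x := summable_pow_mul_genP l 0 hx
  rw [coshL, hsum.tsum_eq_zero_add, ← tsum_mul_left]
  simp only [pow_zero, mul_zero, genP_zero, mul_one, pow_succ, mul_add_one, mul_assoc]
  congr 1
  exact tsum_congr fun k => by ring

end GenP

theorem stmt_13_general (μ : Measure ℝ) [IsProbabilityMeasure μ]
    (l : ℝ) :
    ∀ x ∈ Set.Icc (0:ℝ) 1,
      coshL μ l x = 1 + l * ∫ y in (0:ℝ)..x, (∫ t in (0:ℝ)..y, coshL μ l t ∂μ) := by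
  intro x hx
  have hinner : EqOn (fun y => ∫ t in (0:ℝ)..y, coshL μ l t ∂μ)
      (fun y => ∑' k, l ^ k * genP μ (2 * k + 1) y) (uIcc 0 x) := fun y hy =>
    intervalIntegral_coshL l (uIcc_subset_Icc ⟨le_rfl, zero_le_one⟩ hx hy)
  rw [intervalIntegral.integral_congr hinner, intervalIntegral_tsum_pow_mul_genP l 1 hx,
    coshL_eq_one_add l hx]
  simp only [genP_two_mul_add_two]

theorem stmt_13 (μ : Measure ℝ) [IsProbabilityMeasure μ]
    (hsupp : μ (Set.Icc (0:ℝ) 1)ᶜ = 0) (hna : ∀ x : ℝ, μ {x} = 0)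
    (h0 : ∀ ε > (0:ℝ), 0 < μ (Set.Icc 0 ε)) (h1 : ∀ ε > (0:ℝ), 0 < μ (Set.Icc (1 - ε) 1))
    (l : ℝ) (hl : 0 < l) :
    ∀ x ∈ Set.Icc (0:ℝ) 1,
      coshL μ l x = 1 + l * ∫ y in (0:ℝ)..x, (∫ t in (0:ℝ)..y, coshL μ l t ∂μ) :=
  stmt_13_general μ l
end

section
/- The function g(x) = (1/√λ) sinh_{√λ}(x) satisfies g(x) = x + λ ∫_0^x ∫_0^y g(t) dμ(t) dy for all x ∈ [0,1]; i.e. it solves Δ_μ g = λ g with g(0) = 0 and g'(0) = 1. -/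
open MeasureTheory Set Real Filter

/-- (1/√λ) sinh_{√λ}(x) = Σ_{k≥0} λ^k q_{2k+1}(x) -/
noncomputable def sinhL (μ : Measure ℝ) (l : ℝ) (x : ℝ) : ℝ :=
  ∑' k : ℕ, l ^ k * genQ μ (2 * k + 1) x


/-!
For a probability measure both `q_{2k+1}(x)` and `q_{2k+2}(x)` are at most `x^(k+1)/(k+1)!` for
`x ≥ 0`. This dominates the series `Σ λ^k q_{2k+1}` and `Σ λ^k q_{2k+2}` on bounded intervals,
so both may be integrated term by term. Integrating `dμ` and then `dt` turns `q_{2k+1}` into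
`q_{2k+3}`; this shifts the series by one index, i.e. multiplies it by `λ`, after the term
`q_1(x) = x` is split off.
-/

open intervalIntegral
open scoped Nat

section MonotonePrimitives

variable (μ : Measure ℝ)

lemma MonotoneOn.intervalIntegrable_of_Ici [IsLocallyFiniteMeasure μ] {f : ℝ → ℝ} 
    (hf : MonotoneOn f (Ici 0)) {y : ℝ} (hy : 0 ≤ y) : IntervalIntegrable f μ 0 y :=
  (hf.mono fun _ ht => (le_min le_rfl hy).trans ht.1).intervalIntegrable

lemma monotoneOn_nonneg_primitive [IsLocallyFiniteMeasure μ] {f : ℝ → ℝ}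
    (hmono : MonotoneOn f (Ici 0)) (hnonneg : ∀ x ∈ Ici (0:ℝ), 0 ≤ f x) :
    MonotoneOn (fun x => ∫ t in (0:ℝ)..x, f t ∂μ) (Ici 0) ∧
      ∀ x ∈ Ici (0:ℝ), 0 ≤ ∫ t in (0:ℝ)..x, f t ∂μ := by
  refine ⟨fun x hx y hy hxy => ?_, fun x hx => integral_nonneg hx fun t ht => hnonneg t ht.1⟩
  refine integral_mono_interval le_rfl hx hxy ?_ (hmono.intervalIntegrable_of_Ici μ hy)
  exact (ae_restrict_iff' measurableSet_Ioc).2 (ae_of_all _ fun t ht => hnonneg t ht.1.le)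

lemma intervalIntegral_le_of_monotoneOn_s14 [IsProbabilityMeasure μ] {f : ℝ → ℝ}
    (hmono : MonotoneOn f (Ici 0)) {y : ℝ} (hy : 0 ≤ y) (hfy : 0 ≤ f y) :
    ∫ t in (0:ℝ)..y, f t ∂μ ≤ f y :=
  calc ∫ t in (0:ℝ)..y, f t ∂μ
      ≤ ∫ _ in (0:ℝ)..y, f y ∂μ :=
        integral_mono_on hy (hmono.intervalIntegrable_of_Ici μ hy) intervalIntegrable_const
          fun _ ht => hmono ht.1 hy ht.2
    _ = μ.real (Ioc 0 y) * f y := by simp [integral_const', Ioc_eq_empty_of_le hy]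
    _ ≤ f y := mul_le_of_le_one_left hfy measureReal_le_one

end MonotonePrimitives

section GeneralizedMonomials

variable (μ : Measure ℝ)

lemma genQ_two_mul_add_one (k : ℕ) (x : ℝ) :
    genQ μ (2 * k + 1) x = ∫ t in (0:ℝ)..x, genQ μ (2 * k) t := by
  simp [genQ]

lemma genQ_two_mul_add_two (k : ℕ) (x : ℝ) :
    genQ μ (2 * k + 2) x = ∫ t in (0:ℝ)..x, genQ μ (2 * k + 1) t ∂μ := by
  simp [genQ, Nat.odd_add_one, parity_simps]

lemma genQ_one (x : ℝ) : genQ μ 1 x = x := by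
  simp [genQ]

variable [IsLocallyFiniteMeasure μ]

lemma genQ_monotoneOn_nonneg (n : ℕ) :
    MonotoneOn (genQ μ n) (Ici 0) ∧ ∀ x ∈ Ici (0:ℝ), 0 ≤ genQ μ n x := by
  induction n with
  | zero => exact ⟨fun _ _ _ _ _ => le_rfl, fun _ _ => zero_le_one⟩
  | succ k ih =>
    unfold genQ
    split_ifs
    exacts [monotoneOn_nonneg_primitive volume ih.1 ih.2,
      monotoneOn_nonneg_primitive μ ih.1 ih.2]

lemma genQ_intervalIntegrable (ν : Measure ℝ) [IsLocallyFiniteMeasure ν] (n : ℕ) {y : ℝ}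
    (hy : 0 ≤ y) : IntervalIntegrable (genQ μ n) ν 0 y :=
  (genQ_monotoneOn_nonneg μ n).1.intervalIntegrable_of_Ici ν hy

end GeneralizedMonomials

section Bounds

variable (μ : Measure ℝ) [IsProbabilityMeasure μ]

lemma genQ_two_mul_add_two_le (k : ℕ) {x : ℝ} (hx : 0 ≤ x) :
    genQ μ (2 * k + 2) x ≤ genQ μ (2 * k + 1) x := by
  rw [genQ_two_mul_add_two]
  exact intervalIntegral_le_of_monotoneOn_s14 μ (genQ_monotoneOn_nonneg μ _).1 hx
    ((genQ_monotoneOn_nonneg μ _).2 x hx)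

lemma genQ_two_mul_add_one_le (k : ℕ) {x : ℝ} (hx : 0 ≤ x) :
    genQ μ (2 * k + 1) x ≤ x ^ (k + 1) / (k + 1)! := by
  induction k generalizing x with
  | zero => simp [genQ_one]
  | succ k ih =>
    rw [genQ_two_mul_add_one, show 2 * (k + 1) = 2 * k + 2 by ring]
    calc ∫ t in (0:ℝ)..x, genQ μ (2 * k + 2) t
        ≤ ∫ t in (0:ℝ)..x, t ^ (k + 1) / (k + 1)! :=
          integral_mono_on hx (genQ_intervalIntegrable μ volume _ hx)
            (((continuous_pow _).div_const _).intervalIntegrable _ _)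
            fun t ht => (genQ_two_mul_add_two_le μ k ht.1).trans (ih ht.1)
      _ = x ^ (k + 1 + 1) / (k + 1 + 1)! := by
          rw [intervalIntegral.integral_div, integral_pow, Nat.factorial_succ (k + 1)]
          push_cast
          field_simp
          ring

end Bounds

section Series

variable {μ : Measure ℝ} [IsLocallyFiniteMeasure μ] {m : ℕ → ℕ}
  (hm : ∀ k x, 0 ≤ x → genQ μ (m k) x ≤ x ^ (k + 1) / (k + 1)!) (l : ℝ)
include hm

lemma norm_pow_mul_genQ_le (k : ℕ) {t y : ℝ}
    (ht : 0 ≤ t) (hty : t ≤ y) :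
    ‖l ^ k * genQ μ (m k) t‖ ≤ y * ((|l| * y) ^ k / k !) := by
  rw [norm_mul, norm_pow, Real.norm_eq_abs, Real.norm_of_nonneg
    ((genQ_monotoneOn_nonneg μ _).2 t ht)]
  calc |l| ^ k * genQ μ (m k) t ≤ |l| ^ k * (y ^ (k + 1) / k !) := by
        gcongr
        refine (hm k t ht).trans ?_
        gcongr
        · exact pow_nonneg (ht.trans hty) _
        · exact k.le_succ
    _ = y * ((|l| * y) ^ k / k !) := by ring

lemma summable_pow_mul_genQ {x : ℝ} (hx : 0 ≤ x) :
    Summable fun k => l ^ k * genQ μ (m k) x :=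
  ((Real.summable_pow_div_factorial _).mul_left x).of_norm_bounded
    fun k => norm_pow_mul_genQ_le hm l k hx le_rfl

lemma hasSum_intervalIntegral_pow_mul_genQ (ν : Measure ℝ) [IsLocallyFiniteMeasure ν] {y : ℝ}
    (hy : 0 ≤ y) :
    HasSum (fun k => l ^ k * ∫ t in (0:ℝ)..y, genQ μ (m k) t ∂ν)
      (∫ t in (0:ℝ)..y, ∑' k, l ^ k * genQ μ (m k) t ∂ν) := by
  simp_rw [← intervalIntegral.integral_const_mul]
  refine hasSum_integral_of_dominated_convergence (fun k _ => y * ((|l| * y) ^ k / k !))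
    (fun k => ((genQ_intervalIntegrable μ ν (m k) hy).const_mul _).def'.aestronglyMeasurable)
    (fun k => ae_of_all _ fun t ht => ?_) (ae_of_all _ fun _ _ =>
      (Real.summable_pow_div_factorial _).mul_left y) intervalIntegrable_const
    (ae_of_all _ fun t ht => (summable_pow_mul_genQ hm l ?_).hasSum)
  all_goals rw [uIoc_of_le hy] at ht
  exacts [norm_pow_mul_genQ_le hm l k ht.1.le ht.2, ht.1.le]

end Series

section SinhL

variable (μ : Measure ℝ) [IsProbabilityMeasure μ] (l : ℝ)

lemma intervalIntegral_sinhL {y : ℝ} (hy : 0 ≤ y) :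
    ∫ t in (0:ℝ)..y, sinhL μ l t ∂μ = ∑' k, l ^ k * genQ μ (2 * k + 2) y := by
  simp_rw [genQ_two_mul_add_two]
  exact (hasSum_intervalIntegral_pow_mul_genQ (m := fun k => 2 * k + 1)
    (fun k _ hx => genQ_two_mul_add_one_le μ k hx) l μ hy).tsum_eq.symm

lemma intervalIntegral_tsum_genQ_two_mul_add_two {x : ℝ} (hx : 0 ≤ x) :
    ∫ y in (0:ℝ)..x, ∑' k, l ^ k * genQ μ (2 * k + 2) y
      = ∑' k, l ^ k * genQ μ (2 * (k + 1) + 1) x := by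
  refine (hasSum_intervalIntegral_pow_mul_genQ (m := fun k => 2 * k + 2)
    (fun k _ hx => (genQ_two_mul_add_two_le μ k hx).trans (genQ_two_mul_add_one_le μ k hx))
    l volume hx).tsum_eq.symm.trans (tsum_congr fun k => ?_)
  rw [genQ_two_mul_add_one, mul_add_one]

lemma sinhL_eq_add {x : ℝ} (hx : 0 ≤ x) :
    sinhL μ l x = x + l * ∑' k, l ^ k * genQ μ (2 * (k + 1) + 1) x := by
  rw [sinhL, (summable_pow_mul_genQ (m := fun k => 2 * k + 1)
    (fun k _ hx => genQ_two_mul_add_one_le μ k hx) l hx).tsum_eq_zero_add, ← tsum_mul_left]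
  simp only [pow_succ, mul_assoc, mul_comm l]
  simp [genQ_one]

end SinhL

theorem stmt_14_general (μ : Measure ℝ) [IsProbabilityMeasure μ]
    (l : ℝ) :
    ∀ x ∈ Set.Icc (0:ℝ) 1,
      sinhL μ l x = x + l * ∫ y in (0:ℝ)..x, (∫ t in (0:ℝ)..y, sinhL μ l t ∂μ) := by
  intro x hx
  rw [integral_congr fun y hy => intervalIntegral_sinhL μ l (uIcc_of_le hx.1 ▸ hy).1,
    intervalIntegral_tsum_genQ_two_mul_add_two μ l hx.1, sinhL_eq_add μ l hx.1]

theorem stmt_14 (μ : Measure ℝ) [IsProbabilityMeasure μ]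
    (hsupp : μ (Set.Icc (0:ℝ) 1)ᶜ = 0) (hna : ∀ x : ℝ, μ {x} = 0)
    (h0 : ∀ ε > (0:ℝ), 0 < μ (Set.Icc 0 ε)) (h1 : ∀ ε > (0:ℝ), 0 < μ (Set.Icc (1 - ε) 1))
    (l : ℝ) (hl : 0 < l) :
    ∀ x ∈ Set.Icc (0:ℝ) 1,
      sinhL μ l x = x + l * ∫ y in (0:ℝ)..x, (∫ t in (0:ℝ)..y, sinhL μ l t ∂μ) :=
  stmt_14_general μ l
end
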